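/- Let (Ω,ℬ,μ) be a standard (Lebesgue) probability space and τ : Ω → Ω an invertible measure-preserving transformation (τ is a bijection with τ and τ⁻¹ measurable and measure preserving) which is aperiodic, i.e., μ({x ∈ Ω : τ^p x = x for some integer p ≥ 1}) = 0. Then for every integer n ≥ 1 and every ε > 0 there exists A ∈ ℬ such that A, τ⁻¹(A), …, τ^{-(n-1)}(A) are pairwise disjoint and μ(Ω ∖ ⋃_{i=0}^{n-1} τ^{-i}(A)) < ε. -/

import Mathlib

/-!
Choose `N` with `n / N < ε`. A point `x` with no period below `N` lies in a member `U` of a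
countable family of measurable sets (a basis of the Cantor space, pulled back) that misses
`τ x, …, τ^(N-1) x`, so countably many tower bases `U \ ⋃_{0<k<N} τ⁻ᵏ U` of height `N` cover all
such points. Gluing them greedily, each cut away from the two-sided `N`-window of the part already
chosen, gives one tower base `B` whose window is conull. Since `τ⁻¹ V ⊆ V` for `V = ⋃ₖ τ⁻ᵏ B`,
the set `V` is invariant mod `μ`, so almost every forward orbit enters `B`, while `N μ(B) ≤ 1`.
The points whose first visit to `B` happens at a positive multiple of `n` form the Rokhlin base;
it misses only the points reaching `B` in fewer than `n` steps, of measure at most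
`n μ(B) ≤ n / N`.
-/

open MeasureTheory Set ENNReal

namespace Rokhlin

variable {Ω : Type*} {τ σ : Ω → Ω} {N : ℕ} {B C : Set Ω}

def IsTowerBase (τ : Ω → Ω) (N : ℕ) (B : Set Ω) : Prop :=
  ∀ ⦃k : ℕ⦄, 0 < k → k < N → ∀ ⦃x : Ω⦄, x ∈ B → τ^[k] x ∉ B

-- For `σ = τ⁻¹` this is `⋃_{|k| < N} τᵏ B`.
def window (τ σ : Ω → Ω) (N : ℕ) (B : Set Ω) : Set Ω :=
  ⋃ k ∈ Finset.range N, (τ^[k] ⁻¹' B ∪ σ^[k] ⁻¹' B)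

lemma subset_window (hN : 0 < N) : B ⊆ window τ σ N B := fun _ hx =>
  mem_biUnion (Finset.mem_range.2 hN) (Or.inl hx)

lemma window_mono (h : B ⊆ C) : window τ σ N B ⊆ window τ σ N C :=
  biUnion_mono subset_rfl fun _ _ => union_subset_union (preimage_mono h) (preimage_mono h)

lemma measurableSet_window [MeasurableSpace Ω] (hτ : Measurable τ) (hσ : Measurable σ)
    (hB : MeasurableSet B) : MeasurableSet (window τ σ N B) :=
  Finset.measurableSet_biUnion _ fun k _ => (hτ.iterate k hB).union (hσ.iterate k hB)

namespace IsTowerBase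

lemma mono (hB : IsTowerBase τ N B) (hCB : C ⊆ B) : IsTowerBase τ N C :=
  fun _ hk hkN _ hx hkx => hB hk hkN (hCB hx) (hCB hkx)

lemma union (hστ : Function.LeftInverse σ τ) (hB : IsTowerBase τ N B)
    (hC : IsTowerBase τ N C) (hCB : Disjoint C (window τ σ N B)) :
    IsTowerBase τ N (B ∪ C) := by
  rintro k hk hkN x (hxB | hxC) (hkxB | hkxC)
  · exact hB hk hkN hxB hkxB
  · refine disjoint_left.1 hCB hkxC (mem_biUnion (Finset.mem_range.2 hkN) (Or.inr ?_))
    rwa [mem_preimage, hστ.iterate k x]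
  · exact disjoint_left.1 hCB hxC (mem_biUnion (Finset.mem_range.2 hkN) (Or.inl hkxB))
  · exact hC hk hkN hxC hkxC

lemma iUnion {ι : Type*} {B : ι → Set Ω} (hd : Directed (· ⊆ ·) B)
    (hB : ∀ i, IsTowerBase τ N (B i)) : IsTowerBase τ N (⋃ i, B i) := by
  intro k hk hkN x hx hkx
  obtain ⟨i, hi⟩ := mem_iUnion.1 hx
  obtain ⟨j, hj⟩ := mem_iUnion.1 hkx
  obtain ⟨l, hil, hjl⟩ := hd i j
  exact hB l hk hkN (hil hi) (hjl hj)

lemma pairwiseDisjoint (hB : IsTowerBase τ N B) :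
    (Finset.range N : Set ℕ).PairwiseDisjoint fun k => τ^[k] ⁻¹' B := by
  have key {i j : ℕ} (hij : i < j) (hjN : j < N) : Disjoint (τ^[i] ⁻¹' B) (τ^[j] ⁻¹' B) :=
    disjoint_left.2 fun x hi hj => hB (Nat.sub_pos_of_lt hij) (by omega) hi <| by
      rwa [← Function.iterate_add_apply, Nat.sub_add_cancel hij.le]
  intro i hi j hj hij
  simp only [Finset.coe_range, mem_Iio] at hi hj
  rcases hij.lt_or_gt with h | h
  exacts [key h hj, (key h hi).symm]

lemma natCast_mul_measure_le [MeasurableSpace Ω] {μ : Measure Ω} (hτ : MeasurePreserving τ μ μ)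
    (hBm : MeasurableSet B) (hB : IsTowerBase τ N B) : N * μ B ≤ μ univ := calc
  (N : ℝ≥0∞) * μ B = ∑ k ∈ Finset.range N, μ (τ^[k] ⁻¹' B) := by
    simp [(hτ.iterate _).measure_preimage hBm.nullMeasurableSet]
  _ = μ (⋃ k ∈ Finset.range N, τ^[k] ⁻¹' B) :=
    (measure_biUnion_finset hB.pairwiseDisjoint fun k _ => hτ.measurable.iterate k hBm).symm
  _ ≤ μ univ := measure_mono (subset_univ _)

end IsTowerBase

def greedyBase (τ σ : Ω → Ω) (N : ℕ) (E : ℕ → Set Ω) : ℕ → Set Ω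
  | 0 => ∅
  | m + 1 => greedyBase τ σ N E m ∪ (E m \ window τ σ N (greedyBase τ σ N E m))

lemma monotone_greedyBase (E : ℕ → Set Ω) : Monotone (greedyBase τ σ N E) :=
  monotone_nat_of_le_succ fun _ => subset_union_left

lemma measurableSet_greedyBase [MeasurableSpace Ω] (hτ : Measurable τ) (hσ : Measurable σ)
    {E : ℕ → Set Ω} (hE : ∀ m, MeasurableSet (E m)) (m : ℕ) :
    MeasurableSet (greedyBase τ σ N E m) := by
  induction m with
  | zero => exact .empty
  | succ m ih => exact ih.union ((hE m).diff (measurableSet_window hτ hσ ih))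

lemma isTowerBase_greedyBase (hστ : Function.LeftInverse σ τ) {E : ℕ → Set Ω}
    (hE : ∀ m, IsTowerBase τ N (E m)) (m : ℕ) : IsTowerBase τ N (greedyBase τ σ N E m) := by
  induction m with
  | zero => exact fun _ _ _ _ hx => hx.elim
  | succ m ih => exact ih.union hστ ((hE m).mono sdiff_subset) disjoint_sdiff_left

lemma subset_window_iUnion_greedyBase (hN : 0 < N) (E : ℕ → Set Ω) (m : ℕ) :
    E m ⊆ window τ σ N (⋃ m, greedyBase τ σ N E m) := by
  intro x hx
  by_cases hxW : x ∈ window τ σ N (greedyBase τ σ N E m)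
  · exact window_mono (subset_iUnion _ m) hxW
  · exact subset_window hN (mem_iUnion.2 ⟨m + 1, Or.inr ⟨hx, hxW⟩⟩)

lemma exists_isTowerBase_iUnion_subset_window [MeasurableSpace Ω] (hτ : Measurable τ)
    (hσ : Measurable σ) (hστ : Function.LeftInverse σ τ) (hN : 0 < N) {E : ℕ → Set Ω}
    (hEm : ∀ m, MeasurableSet (E m)) (hE : ∀ m, IsTowerBase τ N (E m)) :
    ∃ B, MeasurableSet B ∧ IsTowerBase τ N B ∧ ⋃ m, E m ⊆ window τ σ N B :=
  ⟨⋃ m, greedyBase τ σ N E m, .iUnion (measurableSet_greedyBase hτ hσ hEm),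
    IsTowerBase.iUnion (monotone_greedyBase E).directed_le (isTowerBase_greedyBase hστ hE),
    iUnion_subset (subset_window_iUnion_greedyBase hN E)⟩

lemma exists_seq_isTowerBase_cover [MeasurableSpace Ω] [MeasurableSpace.CountablySeparated Ω]
    (hτ : Measurable τ) (N : ℕ) :
    ∃ E : ℕ → Set Ω, (∀ m, MeasurableSet (E m)) ∧ (∀ m, IsTowerBase τ N (E m)) ∧
      ∀ x, (∀ k, 0 < k → k < N → τ^[k] x ≠ x) → x ∈ ⋃ m, E m := by
  classical
  obtain ⟨f, hf, hfinj⟩ := MeasurableSpace.measurable_injection_nat_bool_of_countablySeparated Ω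
  obtain ⟨U, hU⟩ := TopologicalSpace.exists_seq_basis (ℕ → Bool)
  have hUm (m : ℕ) : MeasurableSet (f ⁻¹' U m) :=
    hf (hU.isOpen (mem_range_self m)).measurableSet
  refine ⟨fun m => f ⁻¹' U m \ ⋃ k ∈ Finset.Ico 1 N, τ^[k] ⁻¹' (f ⁻¹' U m),
    fun m => (hUm m).diff (Finset.measurableSet_biUnion _ fun k _ => hτ.iterate k (hUm m)),
    fun m k hk hkN x hx hkx => hx.2 (mem_biUnion (Finset.mem_Ico.2 ⟨hk, hkN⟩) hkx.1),
    fun x hx => ?_⟩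
  set F : Finset (ℕ → Bool) := (Finset.Ico 1 N).image fun k => f (τ^[k] x)
  have hxF : f x ∉ F := by
    simp only [F, Finset.mem_image, Finset.mem_Ico, not_exists, not_and, and_imp]
    exact fun k hk hkN h => hx k hk hkN (hfinj h)
  obtain ⟨_, ⟨m, rfl⟩, hxU, hUF⟩ := hU.exists_subset_of_mem_open hxF F.isClosed.isOpen_compl
  refine mem_iUnion.2 ⟨m, hxU, fun hk => ?_⟩
  obtain ⟨k, hk, hkx⟩ := mem_iUnion₂.1 hk
  exact hUF hkx (Finset.mem_image_of_mem (fun k => f (τ^[k] x)) hk)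

lemma exists_isTowerBase_measure_compl_window_eq_zero [MeasurableSpace Ω]
    [MeasurableSpace.CountablySeparated Ω] {μ : Measure Ω} (hτ : Measurable τ)
    (hσ : Measurable σ) (hστ : Function.LeftInverse σ τ) (hN : 0 < N)
    (hap : μ {x | ∃ p, 1 ≤ p ∧ τ^[p] x = x} = 0) :
    ∃ B, MeasurableSet B ∧ IsTowerBase τ N B ∧ μ (window τ σ N B)ᶜ = 0 := by
  obtain ⟨E, hEm, hE, hcover⟩ := exists_seq_isTowerBase_cover hτ N
  obtain ⟨B, hBm, hB, hEB⟩ := exists_isTowerBase_iUnion_subset_window hτ hσ hστ hN hEm hE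
  refine ⟨B, hBm, hB, measure_mono_null (fun x hx => ?_) hap⟩
  rw [mem_ofPred_eq]
  by_contra! h
  exact hx (hEB (hcover x fun k hk _ => h k hk))

lemma _root_.MeasureTheory.MeasurePreserving.measure_diff_preimage_eq_zero [MeasurableSpace Ω]
    {μ : Measure Ω} [IsFiniteMeasure μ] {f : Ω → Ω} (hf : MeasurePreserving f μ μ) {s : Set Ω}
    (hs : MeasurableSet s) (hfs : f ⁻¹' s ⊆ s) : μ (s \ f ⁻¹' s) = 0 := by
  rw [measure_sdiff hfs (hf.measurable hs).nullMeasurableSet (measure_ne_top _ _),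
    hf.measure_preimage hs.nullMeasurableSet, tsub_self]

lemma measure_compl_iUnion_preimage_iterate_eq_zero [MeasurableSpace Ω] {μ : Measure Ω}
    [IsFiniteMeasure μ] (hτ : MeasurePreserving τ μ μ) (hσ : Measurable σ)
    (hστ : Function.LeftInverse σ τ) (hBm : MeasurableSet B) (hB : μ (window τ σ N B)ᶜ = 0) :
    μ (⋃ k, τ^[k] ⁻¹' B)ᶜ = 0 := by
  set V := ⋃ k, τ^[k] ⁻¹' B
  have hVm : MeasurableSet V := .iUnion fun k => hτ.measurable.iterate k hBm
  have hτV (k : ℕ) : τ^[k] ⁻¹' V ⊆ V := fun x hx => by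
    obtain ⟨j, hj⟩ := mem_iUnion.1 hx
    exact mem_iUnion.2 ⟨j + k, by rwa [mem_preimage, Function.iterate_add_apply]⟩
  -- `τ⁻ᵏ (σ⁻ᵏ B \ V) ⊆ V \ τ⁻ᵏ V`
  have hσB (k : ℕ) : μ (σ^[k] ⁻¹' B \ V) = 0 := by
    rw [← (hτ.iterate k).measure_preimage ((hσ.iterate k hBm).diff hVm).nullMeasurableSet]
    refine measure_mono_null ?_ ((hτ.iterate k).measure_diff_preimage_eq_zero hVm (hτV k))
    rintro x ⟨hx, hxV⟩
    exact ⟨mem_iUnion.2 ⟨0, by simpa [hστ.iterate k x] using hx⟩, hxV⟩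
  refine measure_mono_null (fun x hxV => ?_) (measure_union_null hB (measure_iUnion_null hσB))
  by_contra! h
  obtain ⟨k, -, hk | hk⟩ := mem_iUnion₂.1 (notMem_compl_iff.1 (not_or.1 h).1)
  · exact hxV (mem_iUnion.2 ⟨k, hk⟩)
  · exact (not_or.1 h).2 (mem_iUnion.2 ⟨k, hk, hxV⟩)

def firstHitAt (τ : Ω → Ω) (B : Set Ω) (m : ℕ) : Set Ω :=
  {x | τ^[m] x ∈ B ∧ ∀ j < m, τ^[j] x ∉ B}

lemma measurableSet_firstHitAt [MeasurableSpace Ω] (hτ : Measurable τ) (hB : MeasurableSet B)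
    (m : ℕ) : MeasurableSet (firstHitAt τ B m) := by
  simp only [firstHitAt, ofPred_and, ofPred_forall]
  exact (hτ.iterate m hB).inter (.iInter fun j => .iInter fun _ => (hτ.iterate j hB).compl)

lemma firstHitAt_unique {x : Ω} {m m' : ℕ} (h : x ∈ firstHitAt τ B m)
    (h' : x ∈ firstHitAt τ B m') : m = m' := by
  by_contra hne
  rcases Ne.lt_or_gt hne with hlt | hlt
  exacts [h'.2 m hlt h.1, h.2 m' hlt h'.1]

lemma iterate_mem_firstHitAt {x : Ω} {m i : ℕ} (h : x ∈ firstHitAt τ B (m + i)) :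
    τ^[i] x ∈ firstHitAt τ B m := by
  refine ⟨by rw [← Function.iterate_add_apply]; exact h.1, fun j hj => ?_⟩
  rw [← Function.iterate_add_apply]
  exact h.2 _ (by omega)

lemma exists_mem_firstHitAt {x : Ω} (hx : x ∈ ⋃ k, τ^[k] ⁻¹' B) : ∃ m, x ∈ firstHitAt τ B m := by
  classical
  have h : ∃ k, τ^[k] x ∈ B := mem_iUnion.1 hx
  exact ⟨Nat.find h, Nat.find_spec h, fun j hj => Nat.find_min h hj⟩

lemma exists_isTowerBase_compl_subset [MeasurableSpace Ω] (hτ : Measurable τ)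
    (hBm : MeasurableSet B) {n : ℕ} (hn : 0 < n) :
    ∃ A, MeasurableSet A ∧ IsTowerBase τ n A ∧
      (⋃ i ∈ Finset.range n, τ^[i] ⁻¹' A)ᶜ ⊆
        (⋃ k, τ^[k] ⁻¹' B)ᶜ ∪ ⋃ j ∈ Finset.range n, τ^[j] ⁻¹' B := by
  refine ⟨⋃ q, firstHitAt τ B (n * (q + 1)),
    .iUnion fun q => measurableSet_firstHitAt hτ hBm _, ?_, ?_⟩
  · intro d hd hdn x hx hdx
    obtain ⟨q, hq⟩ := mem_iUnion.1 hx
    obtain ⟨q', hq'⟩ := mem_iUnion.1 hdx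
    have hnq : n ≤ n * (q + 1) := Nat.le_mul_of_pos_right n q.succ_pos
    have hshift : τ^[d] x ∈ firstHitAt τ B (n * (q + 1) - d) :=
      iterate_mem_firstHitAt (by rwa [Nat.sub_add_cancel (by omega)])
    have hdiff : n * (q + 1) - n * (q' + 1) = d := by
      have := firstHitAt_unique hshift hq'
      omega
    have hdvd : n ∣ d := hdiff ▸ Nat.dvd_sub (dvd_mul_right n _) (dvd_mul_right n _)
    exact hd.ne' (Nat.eq_zero_of_dvd_of_lt hdvd hdn)
  · intro x hx
    rw [mem_union, or_iff_not_imp_left, notMem_compl_iff]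
    intro hxV
    obtain ⟨h, hh⟩ := exists_mem_firstHitAt hxV
    by_contra hxB
    have hnh : n ≤ h := not_lt.1 fun hlt => hxB (mem_biUnion (Finset.mem_range.2 hlt) hh.1)
    refine hx (mem_biUnion (Finset.mem_range.2 (Nat.mod_lt h hn))
      (mem_iUnion.2 ⟨h / n - 1, iterate_mem_firstHitAt ?_⟩))
    rwa [Nat.sub_add_cancel (Nat.div_pos hnh hn), Nat.div_add_mod]

lemma exists_isTowerBase_measure_compl_le [MeasurableSpace Ω] {μ : Measure Ω}
    (hτ : MeasurePreserving τ μ μ) (hBm : MeasurableSet B) {n : ℕ} (hn : 0 < n) :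
    ∃ A, MeasurableSet A ∧ IsTowerBase τ n A ∧
      μ (⋃ i ∈ Finset.range n, τ^[i] ⁻¹' A)ᶜ ≤ μ (⋃ k, τ^[k] ⁻¹' B)ᶜ + n * μ B := by
  obtain ⟨A, hAm, hA, hAB⟩ := exists_isTowerBase_compl_subset hτ.measurable hBm hn
  refine ⟨A, hAm, hA, ?_⟩
  calc μ (⋃ i ∈ Finset.range n, τ^[i] ⁻¹' A)ᶜ
      ≤ μ (⋃ k, τ^[k] ⁻¹' B)ᶜ + μ (⋃ j ∈ Finset.range n, τ^[j] ⁻¹' B) :=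
        (measure_mono hAB).trans (measure_union_le _ _)
    _ ≤ μ (⋃ k, τ^[k] ⁻¹' B)ᶜ + ∑ j ∈ Finset.range n, μ (τ^[j] ⁻¹' B) := by
        gcongr; exact measure_biUnion_finset_le _ _
    _ = μ (⋃ k, τ^[k] ⁻¹' B)ᶜ + n * μ B := by
        simp [(hτ.iterate _).measure_preimage hBm.nullMeasurableSet]

end Rokhlin

open Rokhlin in
theorem rokhlin_lemma_aperiodic {Ω : Type*} [MeasurableSpace Ω] [StandardBorelSpace Ω]
    (μ : Measure Ω) [IsProbabilityMeasure μ]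
    (τ σ : Ω → Ω) (hτ : Measurable τ) (hσ : Measurable σ)
    (hστ : Function.LeftInverse σ τ)
    (hmpτ : ∀ A : Set Ω, MeasurableSet A → μ (τ ⁻¹' A) = μ A)
    (hap : μ {x : Ω | ∃ p : ℕ, 1 ≤ p ∧ τ^[p] x = x} = 0)
    (n : ℕ) (hn : 1 ≤ n) (ε : ℝ) (hε : 0 < ε) :
    ∃ A : Set Ω, MeasurableSet A ∧
      (∀ i j : ℕ, i < n → j < n → i ≠ j → Disjoint (τ^[i] ⁻¹' A) (τ^[j] ⁻¹' A)) ∧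
      μ (univ \ ⋃ i ∈ Finset.range n, τ^[i] ⁻¹' A) < ENNReal.ofReal ε := by
  have hτμ : MeasurePreserving τ μ μ :=
    ⟨hτ, Measure.ext fun A hA => by rw [Measure.map_apply hτ hA, hmpτ A hA]⟩
  have hεn : ENNReal.ofReal ε / n ≠ 0 :=
    (ENNReal.div_pos (ENNReal.ofReal_pos.2 hε).ne' (natCast_ne_top n)).ne'
  obtain ⟨N, hN⟩ := ENNReal.exists_inv_nat_lt hεn
  have hN0 : 0 < N := by exact_mod_cast ENNReal.inv_lt_top.1 (hN.trans_le le_top)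
  obtain ⟨B, hBm, hB, hBwindow⟩ :=
    exists_isTowerBase_measure_compl_window_eq_zero hτ hσ hστ hN0 hap
  have hμB : μ B ≤ (N : ℝ≥0∞)⁻¹ := ENNReal.le_inv_iff_mul_le.2 <| by
    simpa [mul_comm] using hB.natCast_mul_measure_le hτμ hBm
  obtain ⟨A, hAm, hA, hAcompl⟩ := exists_isTowerBase_measure_compl_le hτμ hBm hn
  refine ⟨A, hAm, fun i j hi hj hij => hA.pairwiseDisjoint (by simpa) (by simpa) hij, ?_⟩
  rw [← compl_eq_univ_sdiff]
  calc μ (⋃ i ∈ Finset.range n, τ^[i] ⁻¹' A)ᶜ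
      ≤ n * μ B := hAcompl.trans_eq <| by
        rw [measure_compl_iUnion_preimage_iterate_eq_zero hτμ hσ hστ hBm hBwindow, zero_add]
    _ ≤ n * (N : ℝ≥0∞)⁻¹ := by gcongr
    _ < n * (ENNReal.ofReal ε / n) := ENNReal.mul_lt_mul_right (by positivity) (natCast_ne_top n) hN
    _ = ENNReal.ofReal ε := ENNReal.mul_div_cancel (by positivity) (natCast_ne_top n)
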